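/- arXiv:2102.02037 — 4 statements merged into one kernel-verified Lean document; each statement's English description precedes it below -/
import Mathlib

section
/- Let E be a separable real Hilbert space and let 1 ≤ p < ∞. For any isometry Φ : W_p(E) → W_p(E) of the p-Wasserstein space W_p(E) there exists a surjective isometry ψ : E → E such that Φ(δ_x) = δ_{ψ(x)} for all x ∈ E, where δ_x denotes the Dirac measure at x. -/
open MeasureTheory ENNReal Topology Filter
open scoped RealInnerProductSpace

noncomputable section

/-- The `p`-Wasserstein "distance" (valued in `ℝ≥0∞`) between two Borel measures on a
metric space: `(inf over couplings π of ∫ ρ(x,y)^p dπ)^(min (1/p) 1)`. -/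
noncomputable def wassersteinDist {X : Type*} [MeasurableSpace X] [PseudoEMetricSpace X]
    (p : ℝ) (μ ν : Measure X) : ℝ≥0∞ :=
  (⨅ π ∈ {π : Measure (X × X) | π.map Prod.fst = μ ∧ π.map Prod.snd = ν},
    ∫⁻ z, edist z.1 z.2 ^ p ∂π) ^ min p⁻¹ 1

/-- Membership in the `p`-Wasserstein space: a Borel probability measure with a finite
`p`-th moment. -/
def MemWp {X : Type*} [MeasurableSpace X] [PseudoEMetricSpace X] (p : ℝ) (μ : Measure X) : Prop :=
  IsProbabilityMeasure μ ∧ ∃ x₀ : X, ∫⁻ x, edist x x₀ ^ p ∂μ ≠ ⊤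


/-!
Dirac masses are characterised metrically inside `W_p(E)`: `μ` is a Dirac mass iff for every `ν`
there is a `σ` with `W(μ, σ) = 2 W(μ, ν)` and `W(ν, σ) = W(μ, ν)`. For `μ = δ_x` one takes for `σ`
the push-forward of `ν` under `y ↦ 2y - x`. Conversely, if `μ` is not a Dirac mass, test with
`ν = δ_b`, where `b` is the midpoint of two points `x₁ ≠ x₂` of the support of `μ`: the product
coupling of `μ` and `σ` is then forced to be optimal with equality `‖x - y‖ = ‖x - b‖ + ‖b - y‖`
on the product of the supports. By strict convexity, every `x - b` with `x ∈ supp μ` lies on the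
ray spanned by `b - y` for a fixed `y ≠ b`, which is impossible for `x₁ - b = -(x₂ - b) ≠ 0`.
Since this characterisation is metric, it is preserved by `Φ` in both directions, and `ψ` is read
off from `Φ(δ_x) = δ_{ψ x}`, using `W(δ_x, δ_y) = ‖x - y‖`.
-/

section Couplings

variable {X : Type*} [MeasurableSpace X]

def couplings (μ ν : Measure X) : Set (Measure (X × X)) :=
  {π | π.map Prod.fst = μ ∧ π.map Prod.snd = ν}

lemma prod_mem_couplings (μ ν : Measure X) [IsProbabilityMeasure μ] [IsProbabilityMeasure ν] :
    μ.prod ν ∈ couplings μ ν :=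
  ⟨by simp [Measure.map_fst_prod], by simp [Measure.map_snd_prod]⟩

lemma map_prodMk_mem_couplings {f : X → X} (hf : Measurable f) (μ : Measure X) :
    μ.map (fun x ↦ (x, f x)) ∈ couplings μ (μ.map f) := by
  refine ⟨?_, ?_⟩ <;> rw [Measure.map_map (by fun_prop) (by fun_prop)]
  · exact Measure.map_id
  · rfl

lemma map_swap_mem_couplings {μ ν : Measure X} {π : Measure (X × X)} (hπ : π ∈ couplings μ ν) :
    π.map Prod.swap ∈ couplings ν μ := by
  refine ⟨?_, ?_⟩ <;> rw [Measure.map_map (by fun_prop) measurable_swap]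
  exacts [hπ.2, hπ.1]

lemma lintegral_fst_of_mem_couplings {μ ν : Measure X} {π : Measure (X × X)}
    (hπ : π ∈ couplings μ ν) {f : X → ℝ≥0∞} (hf : Measurable f) :
    ∫⁻ z, f z.1 ∂π = ∫⁻ x, f x ∂μ := by
  rw [← hπ.1, lintegral_map hf measurable_fst]

lemma lintegral_snd_of_mem_couplings {μ ν : Measure X} {π : Measure (X × X)}
    (hπ : π ∈ couplings μ ν) {f : X → ℝ≥0∞} (hf : Measurable f) :
    ∫⁻ z, f z.2 ∂π = ∫⁻ x, f x ∂ν := by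
  rw [← hπ.2, lintegral_map hf measurable_snd]

end Couplings

section TransportCost

variable {X : Type*} [MeasurableSpace X] [PseudoEMetricSpace X] {p : ℝ}

def transportCost (p : ℝ) (μ ν : Measure X) : ℝ≥0∞ :=
  ⨅ π ∈ couplings μ ν, ∫⁻ z, edist z.1 z.2 ^ p ∂π

lemma wassersteinDist_eq_transportCost_rpow (hp : 1 ≤ p) (μ ν : Measure X) :
    wassersteinDist p μ ν = transportCost p μ ν ^ p⁻¹ := by
  rw [wassersteinDist, min_eq_left (inv_le_one_of_one_le₀ hp)]
  rfl

lemma transportCost_le_lintegral {μ ν : Measure X} {π : Measure (X × X)}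
    (hπ : π ∈ couplings μ ν) :
    transportCost p μ ν ≤ ∫⁻ z, edist z.1 z.2 ^ p ∂π :=
  biInf_le _ hπ

lemma transportCost_comm (p : ℝ) (μ ν : Measure X) :
    transportCost p μ ν = transportCost p ν μ := by
  suffices ∀ μ ν : Measure X, transportCost p ν μ ≤ transportCost p μ ν from
    le_antisymm (this ν μ) (this μ ν)
  intro μ ν
  refine le_iInf₂ fun π hπ ↦
    (transportCost_le_lintegral (map_swap_mem_couplings hπ)).trans_eq ?_
  rw [show (Prod.swap : X × X → X × X) = MeasurableEquiv.prodComm from rfl, lintegral_map_equiv]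
  simp [MeasurableEquiv.prodComm, edist_comm]

lemma wassersteinDist_comm (hp : 1 ≤ p) (μ ν : Measure X) :
    wassersteinDist p μ ν = wassersteinDist p ν μ := by
  rw [wassersteinDist_eq_transportCost_rpow hp, wassersteinDist_eq_transportCost_rpow hp,
    transportCost_comm]

lemma wassersteinDist_le_of_mem_couplings (hp : 1 ≤ p) {μ ν : Measure X} {π : Measure (X × X)}
    (hπ : π ∈ couplings μ ν) :
    wassersteinDist p μ ν ≤ (∫⁻ z, edist z.1 z.2 ^ p ∂π) ^ p⁻¹ := by
  rw [wassersteinDist_eq_transportCost_rpow hp]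
  gcongr
  exact transportCost_le_lintegral hπ

end TransportCost

lemma eq_dirac_of_ae_eq {X : Type*} [MeasurableSpace X] {μ : Measure X} [IsProbabilityMeasure μ]
    {x : X} (h : ∀ᵐ y ∂μ, y = x) : μ = Measure.dirac x :=
  calc μ = μ.map id := Measure.map_id.symm
    _ = μ.map (fun _ ↦ x) := Measure.map_congr h
    _ = Measure.dirac x := by simp [Measure.map_const]

section Dirac

variable {X : Type*} [EMetricSpace X] [MeasurableSpace X] [OpensMeasurableSpace X] {p : ℝ}

lemma lintegral_edist_rpow_of_mem_couplings_dirac {x : X} {ν : Measure X}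
    {π : Measure (X × X)} (hπ : π ∈ couplings (Measure.dirac x) ν) :
    ∫⁻ z, edist z.1 z.2 ^ p ∂π = ∫⁻ y, edist x y ^ p ∂ν := by
  have hfst : ∀ᵐ z ∂π, z.1 = x := by
    refine ae_of_ae_map (p := (· = x)) measurable_fst.aemeasurable ?_
    rw [hπ.1]
    exact (ae_dirac_iff (measurableSet_singleton x)).mpr rfl
  rw [lintegral_congr_ae (hfst.mono fun z hz ↦ by rw [hz]),
    lintegral_snd_of_mem_couplings hπ (f := fun y ↦ edist x y ^ p) (by fun_prop)]

lemma transportCost_dirac_left (x : X) (ν : Measure X) [IsProbabilityMeasure ν] :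
    transportCost p (Measure.dirac x) ν = ∫⁻ y, edist x y ^ p ∂ν := by
  rw [transportCost, biInf_congr fun _ ↦ lintegral_edist_rpow_of_mem_couplings_dirac,
    biInf_const ⟨_, prod_mem_couplings _ _⟩]

lemma wassersteinDist_dirac_left (hp : 1 ≤ p) (x : X) (ν : Measure X) [IsProbabilityMeasure ν] :
    wassersteinDist p (Measure.dirac x) ν = (∫⁻ y, edist x y ^ p ∂ν) ^ p⁻¹ := by
  rw [wassersteinDist_eq_transportCost_rpow hp, transportCost_dirac_left]

lemma wassersteinDist_dirac_right (hp : 1 ≤ p) (μ : Measure X) [IsProbabilityMeasure μ] (x : X) :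
    wassersteinDist p μ (Measure.dirac x) = (∫⁻ y, edist y x ^ p ∂μ) ^ p⁻¹ := by
  simp_rw [wassersteinDist_comm hp μ, wassersteinDist_dirac_left hp, edist_comm x]

lemma wassersteinDist_dirac_dirac (hp : 1 ≤ p) (x y : X) :
    wassersteinDist p (Measure.dirac x) (Measure.dirac y) = edist x y := by
  rw [wassersteinDist_dirac_left hp, lintegral_dirac, ENNReal.rpow_rpow_inv (by positivity)]

lemma wassersteinDist_dirac_le_add [SecondCountableTopology X] (hp : 1 ≤ p) (x : X)
    (ν σ : Measure X) [IsProbabilityMeasure ν] [IsProbabilityMeasure σ] :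
    wassersteinDist p (Measure.dirac x) σ ≤
      wassersteinDist p (Measure.dirac x) ν + wassersteinDist p ν σ := by
  have hp₀ : 0 < p := by positivity
  rw [← tsub_le_iff_left, wassersteinDist_eq_transportCost_rpow hp ν σ,
    ENNReal.le_rpow_inv_iff hp₀]
  refine le_iInf₂ fun π hπ ↦ ?_
  rw [← ENNReal.le_rpow_inv_iff hp₀, tsub_le_iff_left, wassersteinDist_dirac_left hp,
    wassersteinDist_dirac_left hp,
    ← lintegral_snd_of_mem_couplings hπ (f := fun y ↦ edist x y ^ p) (by fun_prop),
    ← lintegral_fst_of_mem_couplings hπ (f := fun y ↦ edist x y ^ p) (by fun_prop), ← one_div]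
  calc (∫⁻ z, edist x z.2 ^ p ∂π) ^ (1 / p)
      ≤ (∫⁻ z, ((fun z : X × X ↦ edist x z.1) + fun z : X × X ↦ edist z.1 z.2) z ^ p ∂π)
          ^ (1 / p) := by
        gcongr with z
        exact edist_triangle _ _ _
    _ ≤ _ := ENNReal.lintegral_Lp_add_le (by fun_prop) (by fun_prop) hp

lemma memWp_of_wassersteinDist_dirac_ne_top (hp : 1 ≤ p) {μ : Measure X}
    [IsProbabilityMeasure μ] {x : X} (h : wassersteinDist p (Measure.dirac x) μ ≠ ⊤) :
    MemWp p μ := by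
  refine ⟨‹_›, x, fun htop ↦ h ?_⟩
  simp_rw [wassersteinDist_dirac_left hp, edist_comm x, htop]
  exact ENNReal.top_rpow_of_pos (by positivity)

lemma memWp_dirac (hp : 1 ≤ p) (x : X) : MemWp p (Measure.dirac x) :=
  memWp_of_wassersteinDist_dirac_ne_top hp (x := x) (by simp [wassersteinDist_dirac_dirac hp])

lemma eq_dirac_of_wassersteinDist_dirac_eq_zero (hp : 1 ≤ p) {μ : Measure X}
    [IsProbabilityMeasure μ] {x : X} (h : wassersteinDist p (Measure.dirac x) μ = 0) :
    μ = Measure.dirac x := by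
  have hp₀ : 0 < p := by positivity
  rw [wassersteinDist_dirac_left hp, ENNReal.rpow_eq_zero_iff_of_pos (inv_pos.2 hp₀),
    lintegral_eq_zero_iff (by fun_prop)] at h
  refine eq_dirac_of_ae_eq (h.mono fun y hy ↦ ?_)
  rw [Pi.zero_apply, ENNReal.rpow_eq_zero_iff_of_pos hp₀, edist_eq_zero] at hy
  exact hy.symm

end Dirac

lemma MemWp.wassersteinDist_dirac_ne_top {X : Type*} [MetricSpace X] [SecondCountableTopology X]
    [MeasurableSpace X] [OpensMeasurableSpace X] {p : ℝ} (hp : 1 ≤ p)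
    {μ : Measure X} (hμ : MemWp p μ) (x : X) : wassersteinDist p (Measure.dirac x) μ ≠ ⊤ := by
  obtain ⟨_, x₀, hx₀⟩ := hμ
  refine ne_top_of_le_ne_top ?_ (wassersteinDist_dirac_le_add hp x (Measure.dirac x₀) μ)
  rw [wassersteinDist_dirac_dirac hp, wassersteinDist_dirac_left hp]
  simp_rw [edist_comm x₀]
  exact ENNReal.add_ne_top.2 ⟨edist_ne_top _ _, ENNReal.rpow_ne_top_of_nonneg (by positivity) hx₀⟩

lemma ae_edist_eq_add_of_wassersteinDist_add_le {X : Type*} [EMetricSpace X]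
    [SecondCountableTopology X] [MeasurableSpace X] [OpensMeasurableSpace X] {p : ℝ}
    (hp : 1 ≤ p) {μ σ : Measure X} [IsProbabilityMeasure μ] [IsProbabilityMeasure σ] (b : X)
    (hfin : wassersteinDist p μ (Measure.dirac b) + wassersteinDist p (Measure.dirac b) σ ≠ ⊤)
    (hle : wassersteinDist p μ (Measure.dirac b) + wassersteinDist p (Measure.dirac b) σ ≤
      wassersteinDist p μ σ) :
    ∀ᵐ z ∂μ.prod σ, edist z.1 z.2 = edist z.1 b + edist b z.2 := by
  have hp₀ : 0 < p := by positivity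
  have hπ := prod_mem_couplings μ σ
  set A := ∫⁻ z, edist z.1 z.2 ^ p ∂μ.prod σ
  set B := ∫⁻ z, (edist z.1 b + edist b z.2) ^ p ∂μ.prod σ
  have hAB : A ≤ B := lintegral_mono fun z ↦ by gcongr; exact edist_triangle _ _ _
  have hB : B ^ p⁻¹ ≤
      wassersteinDist p μ (Measure.dirac b) + wassersteinDist p (Measure.dirac b) σ := by
    rw [wassersteinDist_dirac_right hp, wassersteinDist_dirac_left hp,
      ← lintegral_fst_of_mem_couplings hπ (f := fun y ↦ edist y b ^ p) (by fun_prop),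
      ← lintegral_snd_of_mem_couplings hπ (f := fun y ↦ edist b y ^ p) (by fun_prop), ← one_div]
    exact ENNReal.lintegral_Lp_add_le (by fun_prop) (by fun_prop) hp
  have hBA : B ≤ A := (ENNReal.rpow_le_rpow_iff (inv_pos.2 hp₀)).1 <|
    hB.trans <| hle.trans <| wassersteinDist_le_of_mem_couplings hp hπ
  have hBfin : B ≠ ⊤ := fun h ↦ hfin <| top_le_iff.1 <| by
    simpa [h, ENNReal.top_rpow_of_pos (inv_pos.2 hp₀)] using hB
  have hpow := ae_eq_of_ae_le_of_lintegral_le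
    (ae_of_all _ fun z : X × X ↦ ENNReal.rpow_le_rpow (edist_triangle z.1 b z.2) hp₀.le)
    (ne_top_of_le_ne_top hBfin hAB) (by fun_prop) hBA
  exact hpow.mono fun z hz ↦ ENNReal.rpow_left_injective hp₀.ne' hz

lemma exists_mem_support_ne_of_ne_dirac {X : Type*} [TopologicalSpace X]
    [HereditarilyLindelofSpace X] [MeasurableSpace X] {μ : Measure X} [IsProbabilityMeasure μ]
    {x : X} (h : μ ≠ Measure.dirac x) : ∃ y ∈ μ.support, y ≠ x := by
  by_contra! hsub
  exact h (eq_dirac_of_ae_eq (Filter.mem_of_superset (Measure.support_mem_ae (μ := μ)) hsub))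

lemma mk_mem_of_ae_prod_mem {X Y : Type*} [TopologicalSpace X] [TopologicalSpace Y]
    [MeasurableSpace X] [MeasurableSpace Y] {μ : Measure X} {ν : Measure Y} [SFinite ν]
    {S : Set (X × Y)} (hS : IsClosed S) (h : ∀ᵐ z ∂μ.prod ν, z ∈ S) {x : X} {y : Y}
    (hx : x ∈ μ.support) (hy : y ∈ ν.support) : (x, y) ∈ S := by
  by_contra hxy
  obtain ⟨U, hU, V, hV, hUV⟩ := mem_nhds_prod_iff.1 (hS.isOpen_compl.mem_nhds hxy)
  have hpos : 0 < μ.prod ν (U ×ˢ V) := by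
    rw [Measure.prod_prod]
    exact ENNReal.mul_pos ((Measure.mem_support_iff_forall x).1 hx U hU).ne'
      ((Measure.mem_support_iff_forall y).1 hy V hV).ne'
  exact hpos.ne' (measure_mono_null hUV (ae_iff.1 h))

lemma sameRay_sub_of_edist_eq_add {E : Type*} [NormedAddCommGroup E] [NormedSpace ℝ E]
    [StrictConvexSpace ℝ E] {x b y : E} (h : edist x y = edist x b + edist b y) :
    SameRay ℝ (x - b) (b - y) := by
  rw [sameRay_iff_norm_add, sub_add_sub_cancel, ← dist_eq_norm, ← dist_eq_norm, ← dist_eq_norm]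
  simp only [edist_dist] at h
  rwa [← ENNReal.ofReal_add dist_nonneg dist_nonneg,
    ENNReal.ofReal_eq_ofReal_iff dist_nonneg (by positivity)] at h

def DoublesSegments {X : Type*} [MeasurableSpace X] [PseudoEMetricSpace X] (p : ℝ)
    (μ : Measure X) : Prop :=
  ∀ ν, MemWp p ν → ∃ σ, MemWp p σ ∧ wassersteinDist p μ σ = 2 * wassersteinDist p μ ν ∧
    wassersteinDist p ν σ = wassersteinDist p μ ν

lemma doublesSegments_dirac {E : Type*} [NormedAddCommGroup E] [NormedSpace ℝ E]
    [SecondCountableTopology E] [MeasurableSpace E] [BorelSpace E] {p : ℝ} (hp : 1 ≤ p) (x : E) :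
    DoublesSegments p (Measure.dirac x) := by
  intro ν hν
  have := hν.1
  have hp₀ : 0 < p := by positivity
  set f : E → E := fun y ↦ y + (y - x)
  have hf : Measurable f := by fun_prop
  have hfx (y : E) : edist x (f y) = 2 * edist x y := by
    rw [edist_eq_enorm_sub, edist_eq_enorm_sub, show x - f y = (2 : ℝ) • (x - y) by module,
      enorm_smul]
    congr
    exact_mod_cast Real.enorm_natCast 2
  have hfy (y : E) : edist y (f y) = edist x y := by
    rw [edist_eq_enorm_sub, edist_eq_enorm_sub, show y - f y = x - y by module]
  have := Measure.isProbabilityMeasure_map (μ := ν) hf.aemeasurable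
  have hσ : wassersteinDist p (Measure.dirac x) (ν.map f) =
      2 * wassersteinDist p (Measure.dirac x) ν := by
    rw [wassersteinDist_dirac_left hp, wassersteinDist_dirac_left hp,
      lintegral_map (by fun_prop) hf]
    simp_rw [hfx, ENNReal.mul_rpow_of_nonneg _ _ hp₀.le]
    rw [lintegral_const_mul' _ _ (by simp), ENNReal.mul_rpow_of_nonneg _ _ (by positivity),
      ENNReal.rpow_rpow_inv hp₀.ne']
  have hfin := hν.wassersteinDist_dirac_ne_top hp x
  refine ⟨ν.map f, memWp_of_wassersteinDist_dirac_ne_top hp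
    (hσ ▸ ENNReal.mul_ne_top ENNReal.ofNat_ne_top hfin), hσ, le_antisymm ?_ ?_⟩
  · refine (wassersteinDist_le_of_mem_couplings hp (map_prodMk_mem_couplings hf ν)).trans_eq ?_
    rw [lintegral_map (by fun_prop) (by fun_prop), wassersteinDist_dirac_left hp]
    simp_rw [hfy]
  · refine ENNReal.le_of_add_le_add_left hfin ?_
    rw [← two_mul, ← hσ]
    exact wassersteinDist_dirac_le_add hp x ν (ν.map f)

lemma exists_eq_dirac_of_doublesSegments {E : Type*} [NormedAddCommGroup E] [NormedSpace ℝ E]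
    [StrictConvexSpace ℝ E] [SecondCountableTopology E] [MeasurableSpace E] [BorelSpace E]
    {p : ℝ} (hp : 1 ≤ p) {μ : Measure E} (hμ : MemWp p μ) (h : DoublesSegments p μ) :
    ∃ x, μ = Measure.dirac x := by
  by_contra! hμx
  have := hμ.1
  obtain ⟨x₁, hx₁, -⟩ := exists_mem_support_ne_of_ne_dirac (hμx 0)
  obtain ⟨x₂, hx₂, hx₂₁⟩ := exists_mem_support_ne_of_ne_dirac (hμx x₁)
  set b := midpoint ℝ x₁ x₂
  obtain ⟨σ, hσ, hμσ, hbσ⟩ := h (Measure.dirac b) (memWp_dirac hp b)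
  have := hσ.1
  have hfin : wassersteinDist p μ (Measure.dirac b) ≠ ⊤ :=
    wassersteinDist_comm hp μ _ ▸ hμ.wassersteinDist_dirac_ne_top hp b
  have hσb : σ ≠ Measure.dirac b := by
    rintro rfl
    rw [wassersteinDist_dirac_dirac hp, edist_self, eq_comm, wassersteinDist_comm hp] at hbσ
    exact hμx b (eq_dirac_of_wassersteinDist_dirac_eq_zero hp hbσ)
  obtain ⟨y, hy, hyb⟩ := exists_mem_support_ne_of_ne_dirac hσb
  have hae := ae_edist_eq_add_of_wassersteinDist_add_le hp b
    (by rw [hbσ]; exact ENNReal.add_ne_top.2 ⟨hfin, hfin⟩) (by rw [hbσ, hμσ, two_mul])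
  have hray (x : E) (hx : x ∈ μ.support) : SameRay ℝ (x - b) (b - y) :=
    sameRay_sub_of_edist_eq_add
      (mk_mem_of_ae_prod_mem (isClosed_eq (by fun_prop) (by fun_prop)) hae hx hy)
  have h₁₂ := (hray x₁ hx₁).trans (hray x₂ hx₂).symm fun h ↦ absurd (sub_eq_zero.1 h).symm hyb
  rw [show x₂ - b = -(x₁ - b) by simp only [b, left_sub_midpoint, right_sub_midpoint]; module]
    at h₁₂
  have hb : x₁ - b = 0 := eq_zero_of_sameRay_self_neg h₁₂
  rw [sub_eq_zero, eq_comm, midpoint_eq_left_iff] at hb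
  exact hx₂₁ hb.symm

lemma doublesSegments_iff_of_isometry {X : Type*} [MeasurableSpace X] [PseudoEMetricSpace X]
    {p : ℝ} {Φ : Measure X → Measure X} (hmaps : ∀ μ : Measure X, MemWp p μ → MemWp p (Φ μ))
    (hsurj : ∀ ν : Measure X, MemWp p ν → ∃ μ, MemWp p μ ∧ Φ μ = ν)
    (hiso : ∀ μ ν : Measure X, MemWp p μ → MemWp p ν →
      wassersteinDist p (Φ μ) (Φ ν) = wassersteinDist p μ ν)
    {μ : Measure X} (hμ : MemWp p μ) :
    DoublesSegments p (Φ μ) ↔ DoublesSegments p μ := by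
  constructor
  · intro h ν hν
    obtain ⟨σ', hσ', hμσ, hνσ⟩ := h (Φ ν) (hmaps ν hν)
    obtain ⟨σ, hσ, rfl⟩ := hsurj σ' hσ'
    refine ⟨σ, hσ, ?_, ?_⟩
    · rw [← hiso μ σ hμ hσ, hμσ, hiso μ ν hμ hν]
    · rw [← hiso ν σ hν hσ, hνσ, hiso μ ν hμ hν]
  · intro h ν' hν'
    obtain ⟨ν, hν, rfl⟩ := hsurj ν' hν'
    obtain ⟨σ, hσ, hμσ, hνσ⟩ := h ν hν
    refine ⟨Φ σ, hmaps σ hσ, ?_, ?_⟩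
    · rw [hiso μ σ hμ hσ, hiso μ ν hμ hν, hμσ]
    · rw [hiso ν σ hν hσ, hiso μ ν hμ hν, hνσ]

theorem isometry_sends_diracs_to_diracs_general
    {E : Type*} [NormedAddCommGroup E] [InnerProductSpace ℝ E]
    [SecondCountableTopology E] [MeasurableSpace E] [BorelSpace E]
    (p : ℝ) (hp : 1 ≤ p)
    (Φ : Measure E → Measure E)
    (hmaps : ∀ μ : Measure E, MemWp p μ → MemWp p (Φ μ))
    (hsurj : ∀ ν : Measure E, MemWp p ν → ∃ μ, MemWp p μ ∧ Φ μ = ν)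
    (hiso : ∀ μ ν : Measure E, MemWp p μ → MemWp p ν →
      wassersteinDist p (Φ μ) (Φ ν) = wassersteinDist p μ ν) :
    ∃ ψ : E → E, Isometry ψ ∧ Function.Surjective ψ ∧
      ∀ x : E, Φ (Measure.dirac x) = Measure.dirac (ψ x) := by
  have hΦ {μ : Measure E} (hμ : MemWp p μ) := doublesSegments_iff_of_isometry hmaps hsurj hiso hμ
  have hdirac (x : E) : ∃ y, Φ (Measure.dirac x) = Measure.dirac y :=
    exists_eq_dirac_of_doublesSegments hp (hmaps _ (memWp_dirac hp x))
      ((hΦ (memWp_dirac hp x)).2 (doublesSegments_dirac hp x))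
  choose ψ hψ using hdirac
  refine ⟨ψ, fun x y ↦ ?_, fun y ↦ ?_, hψ⟩
  · rw [← wassersteinDist_dirac_dirac hp, ← hψ, ← hψ,
      hiso _ _ (memWp_dirac hp x) (memWp_dirac hp y), wassersteinDist_dirac_dirac hp]
  · obtain ⟨μ, hμ, hΦμ⟩ := hsurj _ (memWp_dirac hp y)
    obtain ⟨x, rfl⟩ := exists_eq_dirac_of_doublesSegments hp hμ
      ((hΦ hμ).1 (hΦμ ▸ doublesSegments_dirac hp y))
    exact ⟨x, dirac_eq_dirac_iff.1 (hψ x ▸ hΦμ)⟩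

/-- for `1 ≤ p < ∞` and any isometry `Φ` of the `p`-Wasserstein space over a
separable real Hilbert space `E`, there is a surjective isometry `ψ` of `E` with
`Φ(δ_x) = δ_{ψ(x)}` for all `x`. -/
theorem isometry_sends_diracs_to_diracs
    {E : Type*} [NormedAddCommGroup E] [InnerProductSpace ℝ E] [CompleteSpace E]
    [SecondCountableTopology E] [MeasurableSpace E] [BorelSpace E]
    (p : ℝ) (hp : 1 ≤ p)
    (Φ : Measure E → Measure E)
    (hmaps : ∀ μ : Measure E, MemWp p μ → MemWp p (Φ μ))
    (hinj : ∀ μ ν : Measure E, MemWp p μ → MemWp p ν → Φ μ = Φ ν → μ = ν)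
    (hsurj : ∀ ν : Measure E, MemWp p ν → ∃ μ, MemWp p μ ∧ Φ μ = ν)
    (hiso : ∀ μ ν : Measure E, MemWp p μ → MemWp p ν →
      wassersteinDist p (Φ μ) (Φ ν) = wassersteinDist p μ ν) :
    ∃ ψ : E → E, Isometry ψ ∧ Function.Surjective ψ ∧
      ∀ x : E, Φ (Measure.dirac x) = Measure.dirac (ψ x) :=
  isometry_sends_diracs_to_diracs_general p hp Φ hmaps hsurj hiso
end
end

section
/- Let m ∈ ℕ, m ≥ 1, let λ_1, …, λ_m be real numbers not all zero, and let a_1, …, a_m be pairwise distinct positive real numbers. Then the function ℝ → ℝ, t ↦ Σ_{ℓ=1}^{m} λ_ℓ · a_ℓ^t, has at most m−1 real zeros. -/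
/-!
Writing `a_ℓ^t = exp (μ_ℓ t)` with distinct frequencies `μ_ℓ = log a_ℓ`, multiply the exponential
sum by `exp (-μ_0 t)`: this keeps its zeros and makes the `ℓ = 0` term constant, so the derivative
is an exponential sum with one term fewer. Rolle's theorem puts a zero of the derivative between
any two consecutive zeros, so induction on the number of terms bounds the zeros by `m - 1`.
-/

open Real

theorem Set.encard_le_encard_add_one_of_interleaved {α : Type*} [LinearOrder α] {s t : Set α}
    (h : ∀ x ∈ s, ∀ y ∈ s, x < y → ∃ z ∈ t, x < z ∧ z < y) :
    s.encard ≤ t.encard + 1 := by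
  obtain ht | ht := t.finite_or_infinite
  swap
  · simp [ht.encard_eq]
  by_contra! hlt
  obtain ⟨S, hSs, hS⟩ := Set.exists_subset_encard_eq (Order.add_one_le_of_lt hlt)
  have hSfin : S.Finite := Set.finite_of_encard_eq_coe (k := ht.toFinset.card + 2) <| by
    rw [hS, ht.encard_eq_coe_toFinset_card]; norm_cast
  have hcard := Finset.card_le_of_interleaved (s := hSfin.toFinset) (t := ht.toFinset)
    fun x hx y hy hxy _ => by
      simpa using h x (hSs (by simpa using hx)) y (hSs (by simpa using hy)) hxy
  rw [hSfin.encard_eq_coe_toFinset_card, ht.encard_eq_coe_toFinset_card] at hS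
  norm_cast at hS
  omega

/-- No differentiability is needed: where `f` is not differentiable, `deriv f` is `0`. -/
theorem encard_setOf_eq_zero_le_deriv_add_one {f : ℝ → ℝ} (hf : Continuous f) :
    {x | f x = 0}.encard ≤ {x | deriv f x = 0}.encard + 1 :=
  Set.encard_le_encard_add_one_of_interleaved fun _ hx _ hy hxy =>
    let ⟨z, hz, hz0⟩ := exists_deriv_eq_zero hxy hf.continuousOn (hx.trans hy.symm)
    ⟨z, hz0, hz⟩

section ExpSum

variable {ι : Type*} [Fintype ι]

noncomputable def expSum (c μ : ι → ℝ) (t : ℝ) : ℝ := ∑ i, c i * exp (μ i * t)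

theorem hasDerivAt_expSum (c μ : ι → ℝ) (t : ℝ) :
    HasDerivAt (expSum c μ) (expSum (c * μ) μ t) t := by
  unfold expSum
  refine HasDerivAt.fun_sum fun i _ => ?_
  exact ((((hasDerivAt_id t).const_mul (μ i)).exp).const_mul (c i)).congr_deriv <| by
    simp only [Pi.mul_apply, id, mul_one]; ring

theorem deriv_expSum (c μ : ι → ℝ) : deriv (expSum c μ) = expSum (c * μ) μ :=
  funext fun t => (hasDerivAt_expSum c μ t).deriv

theorem continuous_expSum (c μ : ι → ℝ) : Continuous (expSum c μ) :=
  continuous_iff_continuousAt.2 fun t => (hasDerivAt_expSum c μ t).continuousAt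

theorem expSum_sub_const (c μ : ι → ℝ) (s t : ℝ) :
    expSum c (fun i => μ i - s) t = exp (-(s * t)) * expSum c μ t := by
  simp only [expSum, Finset.mul_sum]
  exact Finset.sum_congr rfl fun i _ => by rw [sub_mul, sub_eq_add_neg, exp_add]; ring

theorem expSum_sub_const_eq_zero_iff (c μ : ι → ℝ) (s t : ℝ) :
    expSum c (fun i => μ i - s) t = 0 ↔ expSum c μ t = 0 := by
  rw [expSum_sub_const, mul_eq_zero, or_iff_right (exp_pos _).ne']

theorem expSum_fin_succ {n : ℕ} (c μ : Fin (n + 1) → ℝ) (t : ℝ) :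
    expSum c μ t = c 0 * exp (μ 0 * t) + expSum (c ∘ Fin.succ) (μ ∘ Fin.succ) t :=
  Fin.sum_univ_succ _

end ExpSum

theorem deriv_expSum_sub_first {n : ℕ} (c μ : Fin (n + 1) → ℝ) :
    deriv (expSum c fun i => μ i - μ 0) =
      expSum (fun i : Fin n => c i.succ * (μ i.succ - μ 0)) (fun i => μ i.succ - μ 0) := by
  funext t
  rw [deriv_expSum, expSum_fin_succ]
  simp [Function.comp_def]

theorem encard_setOf_expSum_eq_zero_lt :
    ∀ {n : ℕ} (c μ : Fin n → ℝ), (∃ i, c i ≠ 0) → Function.Injective μ →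
      {t | expSum c μ t = 0}.encard < n
  | 0, _, _, ⟨i, _⟩, _ => i.elim0
  | n + 1, c, μ, hc, hμ => by
    by_cases htail : ∃ i : Fin n, c i.succ ≠ 0
    · have hc' : ∃ i : Fin n, c i.succ * (μ i.succ - μ 0) ≠ 0 :=
        htail.imp fun i hi => mul_ne_zero hi (sub_ne_zero.2 (hμ.ne (Fin.succ_ne_zero i)))
      have hμ' : Function.Injective fun i : Fin n => μ i.succ - μ 0 :=
        fun i j h => Fin.succ_injective _ (hμ (sub_left_inj.1 h))
      calc {t | expSum c μ t = 0}.encard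
          = {t | expSum c (fun i => μ i - μ 0) t = 0}.encard := by
            simp only [expSum_sub_const_eq_zero_iff]
        _ ≤ {t | deriv (expSum c fun i => μ i - μ 0) t = 0}.encard + 1 :=
          encard_setOf_eq_zero_le_deriv_add_one (continuous_expSum _ _)
        _ < (n + 1 : ℕ) := by
          rw [deriv_expSum_sub_first, Nat.cast_add, Nat.cast_one]
          exact (ENat.add_lt_add_iff_right ENat.one_ne_top).2
            (encard_setOf_expSum_eq_zero_lt _ _ hc' hμ')
    · push Not at htail
      have hc0 : c 0 ≠ 0 := by
        obtain ⟨i, hi⟩ := hc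
        cases i using Fin.cases with
        | zero => exact hi
        | succ i => exact absurd (htail i) hi
      have hnz (t : ℝ) : expSum c μ t ≠ 0 := by
        rw [expSum_fin_succ]
        simp [expSum, htail, hc0, (exp_pos _).ne']
      simp [hnz]

theorem exponential_sum_zeros_le_general
    (m : ℕ) (c a : Fin m → ℝ)
    (hc : ∃ ℓ, c ℓ ≠ 0) (ha : ∀ ℓ, 0 < a ℓ) (hainj : Function.Injective a) :
    {t : ℝ | ∑ ℓ, c ℓ * a ℓ ^ t = 0}.encard ≤ ((m - 1 : ℕ) : ℕ∞) := by
  have hrpow (t : ℝ) : ∑ ℓ, c ℓ * a ℓ ^ t = expSum c (fun ℓ => log (a ℓ)) t :=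
    Finset.sum_congr rfl fun ℓ _ => by rw [rpow_def_of_pos (ha ℓ)]
  have hlog : Function.Injective fun ℓ => log (a ℓ) := fun i j h =>
    hainj (log_injOn_pos (ha i) (ha j) h)
  simp_rw [hrpow, ENat.natCast_sub, Nat.cast_one]
  exact ENat.le_sub_one_of_lt (encard_setOf_expSum_eq_zero_lt _ _ hc hlog)

/-- a nontrivial real linear combination of `m` distinct exponential functions
`t ↦ a_ℓ^t` (with `a_ℓ > 0` pairwise distinct) has at most `m - 1` real zeros. -/
theorem exponential_sum_zeros_le
    (m : ℕ) (hm : 1 ≤ m) (c a : Fin m → ℝ)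
    (hc : ∃ ℓ, c ℓ ≠ 0) (ha : ∀ ℓ, 0 < a ℓ) (hainj : Function.Injective a) :
    {t : ℝ | ∑ ℓ, c ℓ * a ℓ ^ t = 0}.encard ≤ ((m - 1 : ℕ) : ℕ∞) :=
  exponential_sum_zeros_le_general m c a hc ha hainj
end

section
/- Let 0 < p < ∞ with p not an even integer and let k = ⌈p/2⌉. Then Σ_{j=0}^{k−1} C(2k,j)·(−1)^j·(k−j)^p ≠ 0, where C(2k,j) denotes the binomial coefficient. -/
/-!
As a function of the exponent, `F t = ∑_{j<k} C(2k,j) (-1)^j (k-j)^t` is an exponential sum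
`∑ c_j exp(μ_j t)` with `k` distinct frequencies `μ_j = log (k-j)` and nonzero coefficients.
Such a sum has at most `k - 1` real zeros: multiplying by `exp(-μ_min t)` and differentiating
removes one term, and Rolle's theorem loses at most one zero. On the other hand `F (2e) = 0`
for `0 < e < k`, because `2k`-th forward differences kill the polynomial `x ^ (2e)` and the
full alternating sum over `j ≤ 2k` is symmetric about `j = k`, where its term vanishes.
These are already `k - 1` zeros, and `p > 2k - 2`, so `F p ≠ 0`.
-/

open Finset Real

theorem exists_finset_deriv_zeros_card_le_add_one {f f' : ℝ → ℝ}
    (hf : ∀ t, HasDerivAt f (f' t) t) {Z : Finset ℝ} (hZ : ∀ t ∈ Z, f t = 0) :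
    ∃ T : Finset ℝ, (∀ t ∈ T, f' t = 0) ∧ Z.card ≤ T.card + 1 := by
  have hrolle : ∀ q ∈ (Z ×ˢ Z).filter (fun q => q.1 < q.2), ∃ z ∈ Set.Ioo q.1 q.2, f' z = 0 := by
    intro q hq
    obtain ⟨hq, hlt⟩ := mem_filter.mp hq
    obtain ⟨hq₁, hq₂⟩ := mem_product.mp hq
    have hcont : Continuous f := continuous_iff_continuousAt.mpr fun t => (hf t).continuousAt
    exact exists_hasDerivAt_eq_zero hlt hcont.continuousOn (by rw [hZ _ hq₁, hZ _ hq₂])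
      fun t _ => hf t
  choose! ξ hξ hξ' using hrolle
  refine ⟨((Z ×ˢ Z).filter (fun q => q.1 < q.2)).image ξ, ?_, card_le_of_interleaved ?_⟩
  · simp only [mem_image]
    rintro _ ⟨q, hq, rfl⟩
    exact hξ' q hq
  · intro x hx y hy hxy _
    have hq : (x, y) ∈ (Z ×ˢ Z).filter (fun q => q.1 < q.2) := by simp [hx, hy, hxy]
    exact ⟨ξ (x, y), mem_image_of_mem ξ hq, hξ _ hq⟩

theorem hasDerivAt_sum_exp {ι : Type*} (s : Finset ι) (c μ : ι → ℝ) (t : ℝ) :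
    HasDerivAt (fun t => ∑ i ∈ s, c i * exp (μ i * t)) (∑ i ∈ s, c i * μ i * exp (μ i * t)) t := by
  refine HasDerivAt.fun_sum fun i _ => ?_
  simpa [mul_comm, mul_assoc, mul_left_comm] using
    (((hasDerivAt_id t).const_mul (μ i)).exp).const_mul (c i)

theorem hasDerivAt_exp_mul_sum_exp {ι : Type*} (s : Finset ι) (c μ : ι → ℝ) (b t : ℝ) :
    HasDerivAt (fun t => exp (-b * t) * ∑ i ∈ s, c i * exp (μ i * t))
      (exp (-b * t) * ∑ i ∈ s, c i * (μ i - b) * exp (μ i * t)) t := by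
  have hexp : HasDerivAt (fun t => exp (-b * t)) (exp (-b * t) * -b) t := by
    simpa using ((hasDerivAt_id t).const_mul (-b)).exp
  refine (hexp.fun_mul (hasDerivAt_sum_exp s c μ t)).congr_deriv ?_
  rw [mul_sum, mul_sum, mul_sum, ← sum_add_distrib]
  exact sum_congr rfl fun i _ => by ring

theorem card_zeros_lt_card_of_sum_exp {ι : Type*} {s : Finset ι} (hs : s.Nonempty)
    {μ : ι → ℝ} (hμ : Set.InjOn μ s) {c : ι → ℝ} (hc : ∀ i ∈ s, c i ≠ 0) {Z : Finset ℝ}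
    (hZ : ∀ t ∈ Z, ∑ i ∈ s, c i * exp (μ i * t) = 0) : Z.card < s.card := by
  classical
  induction s using Finset.induction_on_min_value μ generalizing c Z with
  | empty => exact absurd hs not_nonempty_empty
  | insert a s ha hmin ih =>
    rw [card_insert_of_notMem ha, Nat.lt_succ_iff]
    rcases s.eq_empty_or_nonempty with rfl | hs'
    · refine (card_eq_zero.mpr (eq_empty_of_forall_notMem fun t ht => ?_)).le
      have := hZ t ht
      simp only [insert_empty, sum_singleton] at this
      exact mul_ne_zero (hc a (mem_insert_self a _)) (exp_ne_zero _) this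
    have hlt : ∀ i ∈ s, μ a < μ i := fun i hi => (hmin i hi).lt_of_ne fun h =>
      ha (hμ (mem_insert_self a s) (mem_insert_of_mem hi) h ▸ hi)
    obtain ⟨T, hT, hZT⟩ := exists_finset_deriv_zeros_card_le_add_one
      (hasDerivAt_exp_mul_sum_exp (insert a s) c μ (μ a)) (Z := Z)
      fun t ht => by rw [hZ t ht, mul_zero]
    have hTs : T.card < s.card := by
      refine ih hs' (hμ.mono (subset_insert a s)) (c := fun i => c i * (μ i - μ a))
        (fun i hi => mul_ne_zero (hc i (mem_insert_of_mem hi)) (sub_ne_zero.mpr (hlt i hi).ne'))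
        fun t ht => ?_
      have := hT t ht
      rw [sum_insert ha, sub_self, mul_zero, zero_mul, zero_add] at this
      exact (mul_eq_zero.mp this).resolve_left (exp_ne_zero _)
    omega

theorem card_zeros_lt_card_of_sum_rpow {ι : Type*} {s : Finset ι} (hs : s.Nonempty)
    {b : ι → ℝ} (hb : ∀ i ∈ s, 0 < b i) (hb_inj : Set.InjOn b s) {c : ι → ℝ}
    (hc : ∀ i ∈ s, c i ≠ 0) {Z : Finset ℝ} (hZ : ∀ t ∈ Z, ∑ i ∈ s, c i * b i ^ t = 0) :
    Z.card < s.card := by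
  refine card_zeros_lt_card_of_sum_exp hs (μ := fun i => log (b i))
    (fun i hi j hj h => hb_inj hi hj (log_injOn_pos (hb i hi) (hb j hj) h)) hc fun t ht => ?_
  rw [← hZ t ht]
  exact sum_congr rfl fun i hi => by rw [rpow_def_of_pos (hb i hi)]

theorem sum_range_two_mul_add_one_of_symm {M : Type*} [AddCommMonoid M] (f : ℕ → M) (k : ℕ)
    (hf : ∀ i < k, f (2 * k - i) = f i) :
    ∑ i ∈ range (2 * k + 1), f i = 2 • ∑ i ∈ range k, f i + f k := by
  have hupper : ∑ i ∈ range k, f (k + (i + 1)) = ∑ i ∈ range k, f i := by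
    rw [← sum_range_reflect]
    refine sum_congr rfl fun i hi => ?_
    have hi := mem_range.mp hi
    rw [show k + (k - 1 - i + 1) = 2 * k - i by omega, hf i hi]
  rw [show 2 * k + 1 = k + (k + 1) by ring, sum_range_add, sum_range_succ', hupper]
  simp only [add_zero, two_nsmul, add_assoc]

theorem sum_choose_mul_neg_one_pow_mul_sub_pow_eq_zero {R : Type*} [CommRing R]
    [IsAddTorsionFree R] {k e : ℕ} (he : 0 < e) (hek : e < k) :
    ∑ j ∈ range k, ((2 * k).choose j : R) * (-1) ^ j * ((k : R) - j) ^ (2 * e) = 0 := by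
  set f : ℕ → R := fun j => ((2 * k).choose j : R) * (-1) ^ j * ((k : R) - j) ^ (2 * e)
  have hfull : ∑ j ∈ range (2 * k + 1), f j = 0 := by
    have h := congr_fun (fwdDiff_iter_pow_eq_zero_of_lt (R := R) (by omega : 2 * e < 2 * k)) (-k)
    rw [fwdDiff_iter_eq_sum_shift, Pi.zero_apply] at h
    rw [← h]
    refine sum_congr rfl fun j hj => ?_
    have hj := mem_range.mp hj
    rw [show -(k : R) + j • (1 : R) = -((k : R) - j) by simp; ring, (even_two_mul e).neg_pow,
      neg_one_pow_congr (R := ℤ) (m := 2 * k - j) (n := j) (by simp only [Nat.even_iff]; omega)]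
    simp [f, zsmul_eq_mul, mul_comm]
  have hsymm : ∀ j < k, f (2 * k - j) = f j := by
    intro j hj
    simp only [f, Nat.choose_symm (by omega : j ≤ 2 * k),
      neg_one_pow_congr (R := R) (m := 2 * k - j) (n := j) (by simp only [Nat.even_iff]; omega),
      Nat.cast_sub (by omega : j ≤ 2 * k)]
    rw [show (k : R) - ((2 * k : ℕ) - j) = -((k : R) - j) by push_cast; ring,
      (even_two_mul e).neg_pow]
  have hfk : f k = 0 := by simp [f, zero_pow (by omega : 2 * e ≠ 0)]
  rw [sum_range_two_mul_add_one_of_symm f k hsymm, hfk, add_zero] at hfull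
  exact two_nsmul_eq_zero.mp hfull

theorem two_mul_natCeil_half_sub_one_lt {p : ℝ} (hp : 0 ≤ p) : 2 * ((⌈p / 2⌉₊ : ℝ) - 1) < p := by
  linarith [Nat.ceil_lt_add_one (by positivity : 0 ≤ p / 2)]

theorem alternating_binomial_sum_ne_zero_general
    (p : ℝ) (hp : 0 < p)
    (k : ℕ) (hk : k = ⌈p / 2⌉₊) :
    ∑ j ∈ Finset.range k, ((2 * k).choose j : ℝ) * (-1) ^ j * ((k : ℝ) - j) ^ p ≠ 0 := by
  intro hS
  have hk0 : 0 < k := hk ▸ Nat.ceil_pos.mpr (by positivity)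
  have hlow := hk ▸ two_mul_natCeil_half_sub_one_lt hp.le
  set Z := insert p ((Ico 1 k).image fun e : ℕ => (2 * e : ℝ))
  have hZ : Z.card = k := by
    rw [card_insert_of_notMem, card_image_of_injective _ fun a b h => by simpa using h,
      Nat.card_Ico, Nat.sub_add_cancel hk0]
    simp only [mem_image, mem_Ico, not_exists, not_and]
    intro e ⟨_, he⟩ h
    have : (e : ℝ) + 1 ≤ k := by exact_mod_cast he
    linarith
  have hzeros : ∀ t ∈ Z,
      ∑ j ∈ range k, ((2 * k).choose j : ℝ) * (-1) ^ j * ((k : ℝ) - j) ^ t = 0 := by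
    intro t ht
    rcases mem_insert.mp ht with rfl | ht
    · exact hS
    obtain ⟨e, he, rfl⟩ := mem_image.mp ht
    rw [show (2 * e : ℝ) = (2 * e : ℕ) by push_cast; rfl]
    simp only [rpow_natCast]
    exact sum_choose_mul_neg_one_pow_mul_sub_pow_eq_zero (by simp at he; omega) (mem_Ico.mp he).2
  have hcount := card_zeros_lt_card_of_sum_rpow (nonempty_range_iff.mpr hk0.ne')
    (b := fun j => (k : ℝ) - j) (fun j hj => by simpa using mem_range.mp hj)
    (fun i _ j _ h => by simpa using h) (c := fun j => ((2 * k).choose j : ℝ) * (-1) ^ j)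
    (fun j hj => mul_ne_zero (by exact_mod_cast (Nat.choose_pos (by simp at hj; omega)).ne')
      (by simp)) hzeros
  rw [hZ, card_range] at hcount
  exact hcount.false

/-- for `0 < p < ∞` not an even integer and `k = ⌈p/2⌉`, the alternating
binomial sum `∑_{j=0}^{k-1} C(2k,j) (-1)^j (k-j)^p` is nonzero. -/
theorem alternating_binomial_sum_ne_zero
    (p : ℝ) (hp : 0 < p) (hpne : ¬ ∃ n : ℤ, Even n ∧ p = n)
    (k : ℕ) (hk : k = ⌈p / 2⌉₊) :
    ∑ j ∈ Finset.range k, ((2 * k).choose j : ℝ) * (-1) ^ j * ((k : ℝ) - j) ^ p ≠ 0 :=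
  alternating_binomial_sum_ne_zero_general p hp k hk
end

section
/- Let E be a separable real Hilbert space, let μ, ν ∈ W_2(E), and set σ = d_{W_2}(μ, δ_{m(μ)}) and τ = d_{W_2}(ν, δ_{m(ν)}). Then d_{W_2}²(μ,ν) = ‖m(μ)−m(ν)‖² + σ² + τ² holds if and only if there exist two orthogonal closed affine subspaces L and M of E (i.e. ⟨u−u′, w−w′⟩ = 0 for all u,u′ ∈ L and w,w′ ∈ M) such that supp(μ) ⊂ L and supp(ν) ⊂ M. -/
/-!
For a coupling `π` of `μ` and `ν`, expanding `‖x - y‖²` around the barycenters gives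
`∫ ‖x - y‖² dπ = ‖m(μ) - m(ν)‖² + σ² + τ² - 2 ∫ ⟪x - m(μ), y - m(ν)⟫ dπ`, and the cross term
vanishes for the product coupling `μ ⊗ ν`. So the identity holds iff the cross term is `≤ 0` for
every coupling, i.e. iff `μ ⊗ ν` is an optimal coupling. Perturbing `μ ⊗ ν` by the density
`1 ± g(x) h(y)`, with `g`, `h` centred indicators of Borel sets `A`, `B`, shows that
`⟪∫_A (x - m(μ)) dμ, ∫_B (y - m(ν)) dν⟫ = 0`, hence `⟪x - m(μ), y - m(ν)⟫ = 0` on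
`supp μ × supp ν`, which yields the orthogonal affine subspaces. Conversely, orthogonal closed
affine subspaces carrying the supports contain the barycenters, so the cross term vanishes for
every coupling.
-/

open MeasureTheory ENNReal Topology Filter
open scoped RealInnerProductSpace

noncomputable section

/-- The support of a measure: the smallest closed set whose complement is null. -/
def msupport {X : Type*} [TopologicalSpace X] [MeasurableSpace X] (μ : Measure X) : Set X :=
  ⋂₀ {C : Set X | IsClosed C ∧ μ Cᶜ = 0}

theorem msupport_eq_support {X : Type*} [TopologicalSpace X] [MeasurableSpace X]
    (μ : Measure X) : msupport μ = μ.support :=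
  Measure.support_eq_sInter.symm

theorem toReal_biInf_ofReal_eq_iff_isMinOn {ι : Type*} {S : Set ι} {f : ι → ℝ}
    (hf : ∀ i ∈ S, 0 ≤ f i) {i₀ : ι} (hi₀ : i₀ ∈ S) :
    (⨅ i ∈ S, ENNReal.ofReal (f i)).toReal = f i₀ ↔ IsMinOn f S i₀ := by
  rw [isMinOn_iff]
  constructor
  · intro h i hi
    have hne : (⨅ i ∈ S, ENNReal.ofReal (f i)) ≠ ⊤ :=
      ne_top_of_le_ne_top ofReal_ne_top (iInf₂_le i₀ hi₀)
    have : ENNReal.ofReal (f i₀) ≤ ENNReal.ofReal (f i) := by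
      rw [← h, ofReal_toReal hne]
      exact iInf₂_le i hi
    exact (ofReal_le_ofReal_iff (hf i hi)).1 this
  · intro h
    have : (⨅ i ∈ S, ENNReal.ofReal (f i)) = ENNReal.ofReal (f i₀) :=
      le_antisymm (iInf₂_le i₀ hi₀) (le_iInf₂ fun i hi => ofReal_le_ofReal (h i hi))
    rw [this, toReal_ofReal (hf i₀ hi₀)]

def IsCoupling {α β : Type*} [MeasurableSpace α] [MeasurableSpace β] (μ : Measure α)
    (ν : Measure β) (π : Measure (α × β)) : Prop :=
  π.map Prod.fst = μ ∧ π.map Prod.snd = ν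

theorem toReal_wassersteinDist_two_sq {X : Type*} [MeasurableSpace X] [PseudoEMetricSpace X]
    (μ ν : Measure X) :
    (wassersteinDist 2 μ ν).toReal ^ 2 =
      (⨅ π ∈ {π | IsCoupling μ ν π}, ∫⁻ z, edist z.1 z.2 ^ (2 : ℝ) ∂π).toReal := by
  rw [wassersteinDist, ← ENNReal.toReal_rpow, ← Real.rpow_natCast,
    ← Real.rpow_mul toReal_nonneg]
  norm_num
  rfl

namespace IsCoupling

variable {α β : Type*} [MeasurableSpace α] [MeasurableSpace β] {μ : Measure α} {ν : Measure β}
  {π : Measure (α × β)}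

theorem isProbabilityMeasure [IsProbabilityMeasure μ] (hπ : IsCoupling μ ν π) :
    IsProbabilityMeasure π :=
  have : IsProbabilityMeasure (π.map Prod.fst) := hπ.1 ▸ inferInstance
  Measure.isProbabilityMeasure_of_map Prod.fst

theorem memLp_fst {F : Type*} [NormedAddCommGroup F] {f : α → F} {p : ℝ≥0∞}
    (hπ : IsCoupling μ ν π) (hf : MemLp f p μ) : MemLp (fun z => f z.1) p π := by
  rw [← hπ.1] at hf
  exact (memLp_map_measure_iff hf.1 measurable_fst.aemeasurable).1 hf

theorem memLp_snd {F : Type*} [NormedAddCommGroup F] {f : β → F} {p : ℝ≥0∞}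
    (hπ : IsCoupling μ ν π) (hf : MemLp f p ν) : MemLp (fun z => f z.2) p π := by
  rw [← hπ.2] at hf
  exact (memLp_map_measure_iff hf.1 measurable_snd.aemeasurable).1 hf

theorem integral_fst {F : Type*} [NormedAddCommGroup F] [NormedSpace ℝ F] {f : α → F}
    (hπ : IsCoupling μ ν π) (hf : AEStronglyMeasurable f μ) :
    ∫ z, f z.1 ∂π = ∫ x, f x ∂μ := by
  rw [← hπ.1] at hf ⊢
  rw [integral_map measurable_fst.aemeasurable hf]

theorem integral_snd {F : Type*} [NormedAddCommGroup F] [NormedSpace ℝ F] {f : β → F}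
    (hπ : IsCoupling μ ν π) (hf : AEStronglyMeasurable f ν) :
    ∫ z, f z.2 ∂π = ∫ y, f y ∂ν := by
  rw [← hπ.2] at hf ⊢
  rw [integral_map measurable_snd.aemeasurable hf]

theorem ae_fst (hπ : IsCoupling μ ν π) {p : α → Prop} (h : ∀ᵐ x ∂μ, p x) :
    ∀ᵐ z ∂π, p z.1 :=
  ae_of_ae_map measurable_fst.aemeasurable (hπ.1 ▸ h)

theorem ae_snd (hπ : IsCoupling μ ν π) {p : β → Prop} (h : ∀ᵐ y ∂ν, p y) :
    ∀ᵐ z ∂π, p z.2 :=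
  ae_of_ae_map measurable_snd.aemeasurable (hπ.2 ▸ h)

end IsCoupling

theorem isCoupling_prod {α β : Type*} [MeasurableSpace α] [MeasurableSpace β] (μ : Measure α)
    (ν : Measure β) [IsProbabilityMeasure μ] [IsProbabilityMeasure ν] :
    IsCoupling μ ν (μ.prod ν) :=
  ⟨Measure.fst_prod, Measure.snd_prod⟩

theorem lintegral_edist_rpow_two_eq_ofReal {α E : Type*} [MeasurableSpace α]
    [SeminormedAddCommGroup E] {P : Measure α} {f g : α → E}
    (h : Integrable (fun a => ‖f a - g a‖ ^ 2) P) :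
    ∫⁻ a, edist (f a) (g a) ^ (2 : ℝ) ∂P = ENNReal.ofReal (∫ a, ‖f a - g a‖ ^ 2 ∂P) := by
  rw [ofReal_integral_eq_lintegral_ofReal h (ae_of_all _ fun a => sq_nonneg _)]
  refine lintegral_congr fun a => ?_
  rw [edist_dist, dist_eq_norm, ENNReal.ofReal_rpow_of_nonneg (norm_nonneg _) zero_le_two,
    Real.rpow_two]

theorem MemWp.memLp_two {E : Type*} [NormedAddCommGroup E] [MeasurableSpace E]
    [BorelSpace E] [SecondCountableTopology E] {μ : Measure E} (hμ : MemWp 2 μ) :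
    MemLp (fun x => x) 2 μ := by
  obtain ⟨hP, x₀, hx₀⟩ := hμ
  have hsub : MemLp (fun x => x - x₀) 2 μ := by
    refine ⟨by fun_prop, ?_⟩
    rw [eLpNorm_lt_top_iff_lintegral_rpow_enorm_lt_top two_ne_zero ofNat_ne_top]
    simpa [edist_eq_enorm_sub] using hx₀.lt_top
  simpa [Pi.add_def] using hsub.add (memLp_const x₀)

theorem MeasureTheory.MemLp.integrable_inner {Ω E : Type*} [MeasurableSpace Ω]
    [NormedAddCommGroup E] [InnerProductSpace ℝ E] {P : Measure Ω} {f g : Ω → E} (hf : MemLp f 2 P)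
    (hg : MemLp g 2 P) : Integrable (fun ω => ⟪f ω, g ω⟫) P := by
  refine (L2.integrable_inner (𝕜 := ℝ) (hf.toLp f) (hg.toLp g)).congr ?_
  filter_upwards [hf.coeFn_toLp, hg.coeFn_toLp] with ω hfω hgω
  rw [hfω, hgω]

theorem integral_norm_sub_add_sq {Ω E : Type*} [MeasurableSpace Ω] [NormedAddCommGroup E]
    [InnerProductSpace ℝ E] [CompleteSpace E] {P : Measure Ω} [IsProbabilityMeasure P]
    {f g : Ω → E} (hf : MemLp f 2 P) (hg : MemLp g 2 P) (hfg : ∫ ω, f ω ∂P = ∫ ω, g ω ∂P)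
    (d : E) :
    ∫ ω, ‖f ω - g ω + d‖ ^ 2 ∂P =
      ∫ ω, ‖f ω‖ ^ 2 ∂P + ∫ ω, ‖g ω‖ ^ 2 ∂P + ‖d‖ ^ 2 - 2 * ∫ ω, ⟪f ω, g ω⟫ ∂P := by
  have hf2 : Integrable (fun ω => ‖f ω‖ ^ 2) P := hf.integrable_norm_pow two_ne_zero
  have hg2 : Integrable (fun ω => ‖g ω‖ ^ 2) P := hg.integrable_norm_pow two_ne_zero
  have hfg2 : Integrable (fun ω => ⟪f ω, g ω⟫) P := hf.integrable_inner hg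
  have hsub : Integrable (fun ω => f ω - g ω) P :=
    (hf.integrable one_le_two).sub (hg.integrable one_le_two)
  have hsub2 : Integrable (fun ω => ‖f ω‖ ^ 2 + ‖g ω‖ ^ 2 - 2 * ⟪f ω, g ω⟫) P := by fun_prop
  have hcross : Integrable (fun ω => 2 * ⟪d, f ω - g ω⟫) P := by fun_prop
  have hpt : ∀ ω, ‖f ω - g ω + d‖ ^ 2 =
      ‖f ω‖ ^ 2 + ‖g ω‖ ^ 2 - 2 * ⟪f ω, g ω⟫ + 2 * ⟪d, f ω - g ω⟫ + ‖d‖ ^ 2 := fun ω => by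
    rw [norm_add_sq_real, norm_sub_sq_real, real_inner_comm d]
    ring
  have hcross0 : ∫ ω, ⟪d, f ω - g ω⟫ ∂P = 0 := by
    rw [integral_inner (𝕜 := ℝ) hsub, integral_sub (hf.integrable one_le_two)
      (hg.integrable one_le_two), hfg, sub_self, inner_zero_right]
  simp_rw [hpt]
  rw [integral_add (f := fun ω => ‖f ω‖ ^ 2 + ‖g ω‖ ^ 2 - 2 * ⟪f ω, g ω⟫ + 2 * ⟪d, f ω - g ω⟫)
      (hsub2.add hcross) (integrable_const _), integral_add hsub2 hcross,
    integral_sub (f := fun ω => ‖f ω‖ ^ 2 + ‖g ω‖ ^ 2) (hf2.add hg2) (hfg2.const_mul 2),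
    integral_add hf2 hg2, integral_const_mul, integral_const_mul, hcross0, integral_const]
  simp
  ring

section ProductPerturbation

variable {α β E : Type*} [MeasurableSpace α] [MeasurableSpace β] [NormedAddCommGroup E]
  [InnerProductSpace ℝ E] {μ : Measure α} {ν : Measure β}

theorem integrable_inner_prod [SFinite ν] {f : α → E} {k : β → E} (hf : Integrable f μ)
    (hk : Integrable k ν) : Integrable (fun z : α × β => ⟪f z.1, k z.2⟫) (μ.prod ν) :=
  (hf.norm.mul_prod hk.norm).mono' (hf.1.comp_fst.inner hk.1.comp_snd)
    (ae_of_all _ fun _ => norm_inner_le_norm _ _)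

theorem integral_inner_prod [CompleteSpace E] [SFinite μ] [SFinite ν] {f : α → E} {k : β → E}
    (hf : Integrable f μ) (hk : Integrable k ν) :
    ∫ z, ⟪f z.1, k z.2⟫ ∂(μ.prod ν) = ⟪∫ x, f x ∂μ, ∫ y, k y ∂ν⟫ := by
  rw [integral_prod _ (integrable_inner_prod hf hk)]
  dsimp only
  simp_rw [integral_inner (𝕜 := ℝ) hk, real_inner_comm (∫ y, k y ∂ν)]
  exact integral_inner hf _

theorem one_add_mul_nonneg_of_abs_le_one {a b : ℝ} (ha : |a| ≤ 1) (hb : |b| ≤ 1) :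
    0 ≤ 1 + a * b := by
  have : |a * b| ≤ 1 := by rw [abs_mul]; exact mul_le_one₀ ha (abs_nonneg b) hb
  linarith [neg_abs_le (a * b)]

theorem lintegral_ofReal_one_add_mul [IsProbabilityMeasure ν] {h : β → ℝ} (hm : Measurable h)
    (hb : ∀ y, |h y| ≤ 1) (h0 : ∫ y, h y ∂ν = 0) {c : ℝ} (hc : |c| ≤ 1) :
    ∫⁻ y, ENNReal.ofReal (1 + c * h y) ∂ν = 1 := by
  have hint : Integrable h ν := .of_bound hm.aestronglyMeasurable 1 (ae_of_all _ hb)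
  calc ∫⁻ y, ENNReal.ofReal (1 + c * h y) ∂ν = ENNReal.ofReal (∫ y, (1 + c * h y) ∂ν) :=
        (ofReal_integral_eq_lintegral_ofReal ((integrable_const 1).add (hint.const_mul c))
          (ae_of_all _ fun y => one_add_mul_nonneg_of_abs_le_one hc (hb y))).symm
    _ = 1 := by
      rw [integral_add (integrable_const 1) (hint.const_mul c), integral_const_mul, h0]
      simp

variable [IsProbabilityMeasure μ] [IsProbabilityMeasure ν] {g : α → ℝ} {h : β → ℝ}

theorem isCoupling_withDensity_one_add_mul (hgm : Measurable g) (hhm : Measurable h)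
    (hg : ∀ x, |g x| ≤ 1) (hh : ∀ y, |h y| ≤ 1) (hg0 : ∫ x, g x ∂μ = 0)
    (hh0 : ∫ y, h y ∂ν = 0) :
    IsCoupling μ ν ((μ.prod ν).withDensity fun z => ENNReal.ofReal (1 + g z.1 * h z.2)) := by
  have hρ : Measurable fun z : α × β => ENNReal.ofReal (1 + g z.1 * h z.2) := by fun_prop
  constructor
  · ext s hs
    rw [Measure.map_apply measurable_fst hs, withDensity_apply _ (measurable_fst hs),
      ← Set.prod_univ, ← Measure.restrict_univ (μ := ν), ← Measure.prod_restrict,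
      lintegral_prod _ hρ.aemeasurable]
    simp only [Measure.restrict_univ, fun x => lintegral_ofReal_one_add_mul hhm hh hh0 (hg x)]
    exact setLIntegral_one s
  · ext s hs
    rw [Measure.map_apply measurable_snd hs, withDensity_apply _ (measurable_snd hs),
      ← Set.univ_prod, ← Measure.restrict_univ (μ := μ), ← Measure.prod_restrict,
      lintegral_prod_symm _ hρ.aemeasurable]
    simp only [Measure.restrict_univ, mul_comm (g _),
      fun y => lintegral_ofReal_one_add_mul hgm hg hg0 (hh y)]
    exact setLIntegral_one s

theorem integral_inner_withDensity_one_add_mul [CompleteSpace E] (hgm : Measurable g)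
    (hhm : Measurable h) (hg : ∀ x, |g x| ≤ 1) (hh : ∀ y, |h y| ≤ 1) {f : α → E} {k : β → E}
    (hf : Integrable f μ) (hk : Integrable k ν) :
    ∫ z, ⟪f z.1, k z.2⟫ ∂((μ.prod ν).withDensity fun z => ENNReal.ofReal (1 + g z.1 * h z.2)) =
      ⟪∫ x, f x ∂μ, ∫ y, k y ∂ν⟫ + ⟪∫ x, g x • f x ∂μ, ∫ y, h y • k y ∂ν⟫ := by
  have hgf : Integrable (fun x => g x • f x) μ :=
    hf.bdd_smul 1 hgm.aestronglyMeasurable (ae_of_all _ hg)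
  have hhk : Integrable (fun y => h y • k y) ν :=
    hk.bdd_smul 1 hhm.aestronglyMeasurable (ae_of_all _ hh)
  rw [integral_withDensity_eq_integral_toReal_smul (by fun_prop)
    (ae_of_all _ fun _ => ofReal_lt_top)]
  have hpt : ∀ z : α × β, (ENNReal.ofReal (1 + g z.1 * h z.2)).toReal • ⟪f z.1, k z.2⟫ =
      ⟪f z.1, k z.2⟫ + ⟪g z.1 • f z.1, h z.2 • k z.2⟫ := fun z => by
    rw [toReal_ofReal (one_add_mul_nonneg_of_abs_le_one (hg z.1) (hh z.2)),
      real_inner_smul_left, real_inner_smul_right, smul_eq_mul]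
    ring
  simp_rw [hpt]
  rw [integral_add (integrable_inner_prod hf hk) (integrable_inner_prod hgf hhk),
    integral_inner_prod hf hk, integral_inner_prod hgf hhk]

end ProductPerturbation

section CenteredIndicator

variable {α : Type*} [MeasurableSpace α] {μ : Measure α} {A : Set α}

theorem abs_indicator_one_sub_measureReal_le_one [IsProbabilityMeasure μ] (x : α) :
    |A.indicator 1 x - μ.real A| ≤ 1 := by
  have h0 : 0 ≤ μ.real A := measureReal_nonneg
  have h1 : μ.real A ≤ 1 := measureReal_le_one
  by_cases hx : x ∈ A
  · rw [Set.indicator_of_mem hx, Pi.one_apply, abs_le]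
    constructor <;> linarith
  · rw [Set.indicator_of_notMem hx, zero_sub, abs_neg, abs_of_nonneg h0]
    exact h1

theorem integral_indicator_one_sub_measureReal [IsProbabilityMeasure μ] (hA : MeasurableSet A) :
    ∫ x, (A.indicator 1 x - μ.real A) ∂μ = 0 := by
  rw [integral_sub ((integrable_const 1).indicator hA) (integrable_const _),
    integral_indicator_one hA, integral_const]
  simp

theorem integral_indicator_one_sub_measureReal_smul {F : Type*} [NormedAddCommGroup F]
    [NormedSpace ℝ F]
    (hA : MeasurableSet A) {f : α → F} (hf : Integrable f μ) (hf0 : ∫ x, f x ∂μ = 0) :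
    ∫ x, (A.indicator 1 x - μ.real A) • f x ∂μ = ∫ x in A, f x ∂μ := by
  have hind : ∀ x, A.indicator (1 : α → ℝ) x • f x = A.indicator f x := fun x => by
    by_cases hx : x ∈ A <;> simp [hx]
  simp_rw [sub_smul, hind]
  rw [integral_sub (g := fun x => μ.real A • f x) (hf.indicator hA) (hf.smul _),
    integral_indicator hA, integral_smul, hf0, smul_zero, sub_zero]

end CenteredIndicator

theorem eq_zero_of_mem_support_of_forall_setIntegral_eq_zero {X F : Type*} [TopologicalSpace X]
    [MeasurableSpace X] [NormedAddCommGroup F] [NormedSpace ℝ F] [CompleteSpace F]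
    {μ : Measure X} [SigmaFinite μ] {φ : X → F} (hφc : Continuous φ) (hφ : Integrable φ μ)
    (h : ∀ s, MeasurableSet s → ∫ x in s, φ x ∂μ = 0) {x : X} (hx : x ∈ μ.support) :
    φ x = 0 := by
  have hae : φ =ᵐ[μ] 0 := ae_eq_zero_of_forall_setIntegral_eq_of_sigmaFinite
    (fun _ _ _ => hφ.integrableOn) fun s hs _ => h s hs
  exact Measure.support_subset_of_isClosed (isClosed_eq hφc continuous_const) hae hx

theorem inner_eq_zero_of_mem_support_of_forall_setIntegral {α β E : Type*} [TopologicalSpace α]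
    [MeasurableSpace α] [TopologicalSpace β] [MeasurableSpace β] [NormedAddCommGroup E]
    [InnerProductSpace ℝ E] [CompleteSpace E] {μ : Measure α} {ν : Measure β} [SigmaFinite μ]
    [SigmaFinite ν] {f : α → E} {k : β → E} (hfc : Continuous f) (hkc : Continuous k)
    (hf : Integrable f μ) (hk : Integrable k ν)
    (h : ∀ A B, MeasurableSet A → MeasurableSet B → ⟪∫ x in A, f x ∂μ, ∫ y in B, k y ∂ν⟫ = 0)
    {x : α} {y : β} (hx : x ∈ μ.support) (hy : y ∈ ν.support) : ⟪f x, k y⟫ = 0 := by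
  have hxB : ∀ B, MeasurableSet B → ⟪f x, ∫ y in B, k y ∂ν⟫ = 0 := fun B hB =>
    eq_zero_of_mem_support_of_forall_setIntegral_eq_zero (φ := fun x => ⟪f x, ∫ y in B, k y ∂ν⟫)
      (hfc.inner continuous_const) (hf.inner_const _) (fun A hA => by
        simp_rw [real_inner_comm (∫ y in B, k y ∂ν)]
        rw [integral_inner (𝕜 := ℝ) hf.integrableOn, real_inner_comm]
        exact h A B hA hB) hx
  exact eq_zero_of_mem_support_of_forall_setIntegral_eq_zero (φ := fun y => ⟪f x, k y⟫)
    (continuous_const.inner hkc) (hk.const_inner _)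
    (fun B hB => by rw [integral_inner (𝕜 := ℝ) hk.integrableOn]; exact hxB B hB) hy

theorem exists_isClosed_orthogonal_affineSubspaces {E : Type*} [NormedAddCommGroup E]
    [InnerProductSpace ℝ E] {S T : Set E} {p q : E}
    (h : ∀ x ∈ S, ∀ y ∈ T, ⟪x - p, y - q⟫ = 0) :
    ∃ L M : AffineSubspace ℝ E, IsClosed (L : Set E) ∧ IsClosed (M : Set E) ∧
      (∀ u ∈ L, ∀ u' ∈ L, ∀ w ∈ M, ∀ w' ∈ M, ⟪u - u', w - w'⟫ = 0) ∧
      S ⊆ L ∧ T ⊆ M := by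
  set V := Submodule.span ℝ ((· - q) '' T)
  have hSV : Submodule.span ℝ ((· - p) '' S) ≤ Vᗮ :=
    Submodule.isOrtho_iff_le.1 <| Submodule.isOrtho_span.2 <| by
      rintro _ ⟨x, hx, rfl⟩ _ ⟨y, hy, rfl⟩
      exact h x hx y hy
  have hclosed : ∀ (r : E) (K : Submodule ℝ E), IsClosed (K : Set E) →
      IsClosed (AffineSubspace.mk' r K : Set E) := fun r K hK =>
    (AffineSubspace.isClosed_direction_iff _).1 (by rwa [AffineSubspace.direction_mk'])
  -- Directions `Vᗮ` and `Vᗮᗮ` rather than the two spans, so that both subspaces are closed.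
  refine ⟨AffineSubspace.mk' p Vᗮ, AffineSubspace.mk' q Vᗮᗮ,
    hclosed _ _ (Submodule.isClosed_orthogonal _), hclosed _ _ (Submodule.isClosed_orthogonal _),
    fun u hu u' hu' w hw w' hw' => ?_, fun x hx => ?_, fun y hy => ?_⟩
  · have hu : u -ᵥ u' ∈ Vᗮ :=
      AffineSubspace.direction_mk' p Vᗮ ▸ AffineSubspace.vsub_mem_direction hu hu'
    have hw : w -ᵥ w' ∈ Vᗮᗮ :=
      AffineSubspace.direction_mk' q Vᗮᗮ ▸ AffineSubspace.vsub_mem_direction hw hw'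
    exact Submodule.inner_right_of_mem_orthogonal hu hw
  · exact AffineSubspace.mem_mk'.2 (hSV (Submodule.subset_span ⟨x, hx, rfl⟩))
  · exact AffineSubspace.mem_mk'.2
      (Submodule.le_orthogonal_orthogonal V (Submodule.subset_span ⟨y, hy, rfl⟩))

def MeasureTheory.Measure.barycenter {E : Type*} [NormedAddCommGroup E] [NormedSpace ℝ E]
    [MeasurableSpace E] (μ : Measure E) : E :=
  ∫ x, x ∂μ

theorem integral_sub_barycenter {E : Type*} [NormedAddCommGroup E] [NormedSpace ℝ E]
    [CompleteSpace E] [MeasurableSpace E] {μ : Measure E} [IsProbabilityMeasure μ]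
    (hμ : Integrable (fun x => x) μ) : ∫ x, (x - μ.barycenter) ∂μ = 0 := by
  rw [integral_sub hμ (integrable_const _), integral_const]
  simp [Measure.barycenter]

section Barycenter

variable {E : Type*} [NormedAddCommGroup E] [InnerProductSpace ℝ E] [CompleteSpace E]
  [MeasurableSpace E] {μ ν : Measure E} [IsProbabilityMeasure μ] [IsProbabilityMeasure ν]

theorem integral_inner_sub_barycenter_prod (hμ : Integrable (fun x => x) μ)
    (hν : Integrable (fun y => y) ν) :
    ∫ z, ⟪z.1 - μ.barycenter, z.2 - ν.barycenter⟫ ∂(μ.prod ν) = 0 := by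
  rw [integral_inner_prod (f := fun x => x - μ.barycenter) (k := fun y => y - ν.barycenter)
    (hμ.sub (integrable_const _)) (hν.sub (integrable_const _)), integral_sub_barycenter hμ,
    inner_zero_left]

theorem inner_integral_smul_sub_barycenter_eq_zero (hμ : Integrable (fun x => x) μ)
    (hν : Integrable (fun y => y) ν)
    (hX : ∀ π, IsCoupling μ ν π → ∫ z, ⟪z.1 - μ.barycenter, z.2 - ν.barycenter⟫ ∂π ≤ 0)
    {g h : E → ℝ} (hgm : Measurable g) (hhm : Measurable h) (hg : ∀ x, |g x| ≤ 1)
    (hh : ∀ y, |h y| ≤ 1) (hg0 : ∫ x, g x ∂μ = 0) (hh0 : ∫ y, h y ∂ν = 0) :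
    ⟪∫ x, g x • (x - μ.barycenter) ∂μ, ∫ y, h y • (y - ν.barycenter) ∂ν⟫ = 0 := by
  have key : ∀ g' : E → ℝ, Measurable g' → (∀ x, |g' x| ≤ 1) → ∫ x, g' x ∂μ = 0 →
      ⟪∫ x, g' x • (x - μ.barycenter) ∂μ, ∫ y, h y • (y - ν.barycenter) ∂ν⟫ ≤ 0 := by
    intro g' hg'm hg' hg'0
    have := hX _ (isCoupling_withDensity_one_add_mul hg'm hhm hg' hh hg'0 hh0)
    rwa [integral_inner_withDensity_one_add_mul hg'm hhm hg' hh
      (f := fun x => x - μ.barycenter) (k := fun y => y - ν.barycenter)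
      (hμ.sub (integrable_const _)) (hν.sub (integrable_const _)),
      integral_sub_barycenter hμ, inner_zero_left, zero_add] at this
  refine le_antisymm (key g hgm hg hg0) ?_
  have := key (fun x => -g x) hgm.neg (by simpa only [abs_neg] using hg)
    (by rw [integral_neg, hg0, neg_zero])
  simp only [neg_smul, integral_neg, inner_neg_left] at this
  linarith

theorem inner_setIntegral_sub_barycenter_eq_zero (hμ : Integrable (fun x => x) μ)
    (hν : Integrable (fun y => y) ν)
    (hX : ∀ π, IsCoupling μ ν π → ∫ z, ⟪z.1 - μ.barycenter, z.2 - ν.barycenter⟫ ∂π ≤ 0)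
    {A B : Set E} (hA : MeasurableSet A) (hB : MeasurableSet B) :
    ⟪∫ x in A, (x - μ.barycenter) ∂μ, ∫ y in B, (y - ν.barycenter) ∂ν⟫ = 0 := by
  have := inner_integral_smul_sub_barycenter_eq_zero hμ hν hX
    (g := fun x => A.indicator 1 x - μ.real A) (h := fun y => B.indicator 1 y - ν.real B)
    ((measurable_const.indicator hA).sub measurable_const)
    ((measurable_const.indicator hB).sub measurable_const)
    abs_indicator_one_sub_measureReal_le_one abs_indicator_one_sub_measureReal_le_one
    (integral_indicator_one_sub_measureReal hA) (integral_indicator_one_sub_measureReal hB)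
  rwa [integral_indicator_one_sub_measureReal_smul (f := fun x => x - μ.barycenter) hA
      (hμ.sub (integrable_const _)) (integral_sub_barycenter hμ),
    integral_indicator_one_sub_measureReal_smul (f := fun y => y - ν.barycenter) hB
      (hν.sub (integrable_const _)) (integral_sub_barycenter hν)] at this

variable [SecondCountableTopology E]

theorem integral_inner_sub_barycenter_eq_zero_of_support_subset (hμ : Integrable (fun x => x) μ)
    (hν : Integrable (fun y => y) ν) {L M : AffineSubspace ℝ E} (hL : IsClosed (L : Set E))
    (hM : IsClosed (M : Set E))
    (horth : ∀ u ∈ L, ∀ u' ∈ L, ∀ w ∈ M, ∀ w' ∈ M, ⟪u - u', w - w'⟫ = 0)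
    (hμL : μ.support ⊆ L) (hνM : ν.support ⊆ M) {π : Measure (E × E)} (hπ : IsCoupling μ ν π) :
    ∫ z, ⟪z.1 - μ.barycenter, z.2 - ν.barycenter⟫ ∂π = 0 := by
  have haeL : ∀ᵐ x ∂μ, x ∈ L := mem_of_superset Measure.support_mem_ae hμL
  have haeM : ∀ᵐ y ∂ν, y ∈ M := mem_of_superset Measure.support_mem_ae hνM
  have hbL : μ.barycenter ∈ L := L.convex.integral_mem hL haeL hμ
  have hbM : ν.barycenter ∈ M := M.convex.integral_mem hM haeM hν
  refine integral_eq_zero_of_ae ?_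
  filter_upwards [hπ.ae_fst haeL, hπ.ae_snd haeM] with z hz₁ hz₂
  exact horth _ hz₁ _ hbL _ hz₂ _ hbM

variable [BorelSpace E]

theorem IsCoupling.integral_norm_sub_sq (hμ : MemLp (fun x => x) 2 μ)
    (hν : MemLp (fun y => y) 2 ν) {π : Measure (E × E)} (hπ : IsCoupling μ ν π) :
    ∫ z, ‖z.1 - z.2‖ ^ 2 ∂π =
      ∫ x, ‖x - μ.barycenter‖ ^ 2 ∂μ + ∫ y, ‖y - ν.barycenter‖ ^ 2 ∂ν
        + ‖μ.barycenter - ν.barycenter‖ ^ 2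
        - 2 * ∫ z, ⟪z.1 - μ.barycenter, z.2 - ν.barycenter⟫ ∂π := by
  have := hπ.isProbabilityMeasure
  have hf : MemLp (fun z : E × E => z.1 - μ.barycenter) 2 π :=
    hπ.memLp_fst (hμ.sub (memLp_const _))
  have hg : MemLp (fun z : E × E => z.2 - ν.barycenter) 2 π :=
    hπ.memLp_snd (hν.sub (memLp_const _))
  have hfg : ∫ z, (z.1 - μ.barycenter) ∂π = ∫ z, (z.2 - ν.barycenter) ∂π := by
    rw [hπ.integral_fst (f := fun x => x - μ.barycenter) (by fun_prop),
      hπ.integral_snd (f := fun y => y - ν.barycenter) (by fun_prop),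
      integral_sub_barycenter (hμ.integrable one_le_two),
      integral_sub_barycenter (hν.integrable one_le_two)]
  have key := integral_norm_sub_add_sq hf hg hfg (μ.barycenter - ν.barycenter)
  have hpt : ∀ z : E × E, z.1 - μ.barycenter - (z.2 - ν.barycenter)
      + (μ.barycenter - ν.barycenter) = z.1 - z.2 := fun z => by abel
  simp only [hpt] at key
  rw [key, hπ.integral_fst (f := fun x => ‖x - μ.barycenter‖ ^ 2) (by fun_prop),
    hπ.integral_snd (f := fun y => ‖y - ν.barycenter‖ ^ 2) (by fun_prop)]

theorem toReal_wassersteinDist_two_sq_eq_iff (hμ : MemLp (fun x => x) 2 μ)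
    (hν : MemLp (fun y => y) 2 ν) :
    (wassersteinDist 2 μ ν).toReal ^ 2 = ‖μ.barycenter - ν.barycenter‖ ^ 2
        + ∫ x, ‖x - μ.barycenter‖ ^ 2 ∂μ + ∫ y, ‖y - ν.barycenter‖ ^ 2 ∂ν ↔
      ∀ π, IsCoupling μ ν π → ∫ z, ⟪z.1 - μ.barycenter, z.2 - ν.barycenter⟫ ∂π ≤ 0 := by
  have hcost : ∀ π ∈ {π | IsCoupling μ ν π}, ∫⁻ z, edist z.1 z.2 ^ (2 : ℝ) ∂π =
      ENNReal.ofReal (∫ z, ‖z.1 - z.2‖ ^ 2 ∂π) := fun π hπ =>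
    lintegral_edist_rpow_two_eq_ofReal
      (((hπ.memLp_fst hμ).sub (hπ.memLp_snd hν)).integrable_norm_pow two_ne_zero)
  have hprod := isCoupling_prod μ ν
  have hcross := integral_inner_sub_barycenter_prod (hμ.integrable one_le_two)
    (hν.integrable one_le_two)
  have hprod_cost : ‖μ.barycenter - ν.barycenter‖ ^ 2 + ∫ x, ‖x - μ.barycenter‖ ^ 2 ∂μ
      + ∫ y, ‖y - ν.barycenter‖ ^ 2 ∂ν = ∫ z, ‖z.1 - z.2‖ ^ 2 ∂(μ.prod ν) := by
    rw [hprod.integral_norm_sub_sq hμ hν, hcross]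
    ring
  rw [toReal_wassersteinDist_two_sq, biInf_congr hcost, hprod_cost,
    toReal_biInf_ofReal_eq_iff_isMinOn (S := {π | IsCoupling μ ν π})
      (f := fun π => ∫ z, ‖z.1 - z.2‖ ^ 2 ∂π) (fun π _ => integral_nonneg fun _ => sq_nonneg _)
      hprod,
    isMinOn_iff]
  refine forall₂_congr fun π hπ => ?_
  rw [hπ.integral_norm_sub_sq hμ hν, hprod.integral_norm_sub_sq hμ hν, hcross]
  constructor <;> intro h <;> linarith

theorem toReal_wassersteinDist_dirac_barycenter_sq (hμ : MemLp (fun x => x) 2 μ) :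
    (wassersteinDist 2 μ (Measure.dirac μ.barycenter)).toReal ^ 2 =
      ∫ x, ‖x - μ.barycenter‖ ^ 2 ∂μ := by
  have hae : ∀ᵐ y ∂Measure.dirac μ.barycenter, y = μ.barycenter := by
    rw [ae_dirac_eq]
    exact eventually_pure.2 rfl
  have hδ : MemLp (fun y => y) 2 (Measure.dirac μ.barycenter) :=
    (memLp_const μ.barycenter).ae_eq (hae.mono fun y hy => hy.symm)
  have hbδ : (Measure.dirac μ.barycenter).barycenter = μ.barycenter :=
    integral_dirac (fun y => y) μ.barycenter
  have key := (toReal_wassersteinDist_two_sq_eq_iff hμ hδ).2 fun π hπ => by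
    rw [integral_eq_zero_of_ae ((hπ.ae_snd hae).mono fun z hz => by simp [hz, hbδ])]
  simpa [hbδ, integral_dirac] using key

end Barycenter

/-- Pythagorean-type identity for `W₂` characterizing measures supported on
orthogonal closed affine subspaces; here `bμ = m(μ)`, `bν = m(ν)` are the barycenters and
`σ = d_{W₂}(μ, δ_{m(μ)})`, `τ = d_{W₂}(ν, δ_{m(ν)})`. -/
theorem W2_pythagoras_iff_orthogonal_supports
    {E : Type*} [NormedAddCommGroup E] [InnerProductSpace ℝ E] [CompleteSpace E]
    [SecondCountableTopology E] [MeasurableSpace E] [BorelSpace E]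
    (μ ν : Measure E) (hμ : MemWp 2 μ) (hν : MemWp 2 ν)
    (bμ bν : E) (hbμ : bμ = ∫ x, x ∂μ) (hbν : bν = ∫ x, x ∂ν)
    (σ τ : ℝ)
    (hσ : σ = (wassersteinDist 2 μ (Measure.dirac bμ)).toReal)
    (hτ : τ = (wassersteinDist 2 ν (Measure.dirac bν)).toReal) :
    (wassersteinDist 2 μ ν).toReal ^ 2 = ‖bμ - bν‖ ^ 2 + σ ^ 2 + τ ^ 2 ↔
      ∃ L M : AffineSubspace ℝ E, IsClosed (L : Set E) ∧ IsClosed (M : Set E) ∧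
        (∀ u ∈ L, ∀ u' ∈ L, ∀ w ∈ M, ∀ w' ∈ M, (inner ℝ (u - u') (w - w') : ℝ) = 0) ∧
        msupport μ ⊆ (L : Set E) ∧ msupport ν ⊆ (M : Set E) := by
  obtain rfl : bμ = μ.barycenter := hbμ
  obtain rfl : bν = ν.barycenter := hbν
  subst hσ hτ
  have := hμ.1
  have := hν.1
  have hμ2 := hμ.memLp_two
  have hν2 := hν.memLp_two
  have hμ1 := hμ2.integrable one_le_two
  have hν1 := hν2.integrable one_le_two
  rw [toReal_wassersteinDist_dirac_barycenter_sq hμ2,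
    toReal_wassersteinDist_dirac_barycenter_sq hν2, toReal_wassersteinDist_two_sq_eq_iff hμ2 hν2,
    msupport_eq_support, msupport_eq_support]
  constructor
  · intro hX
    exact exists_isClosed_orthogonal_affineSubspaces fun x hx y hy =>
      inner_eq_zero_of_mem_support_of_forall_setIntegral (by fun_prop) (by fun_prop)
        (hμ1.sub (integrable_const _)) (hν1.sub (integrable_const _))
        (fun A B hA hB => inner_setIntegral_sub_barycenter_eq_zero hμ1 hν1 hX hA hB) hx hy
  · rintro ⟨L, M, hL, hM, horth, hμL, hνM⟩ π hπ
    exact (integral_inner_sub_barycenter_eq_zero_of_support_subset hμ1 hν1 hL hM horth hμL hνM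
      hπ).le
end
end
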